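/- Let (Ω, Σ, μ) be a measure space, N ≥ 1, and let f₁,…,f_N : Ω → ℂ be measurable, square-integrable functions that are linearly independent in L²(μ) (no nontrivial complex linear combination of them vanishes μ-almost everywhere). Let g : Ω → ℝ be a bounded measurable function. For t ∈ ℝ let H(t) be the N×N complex matrix with entries H(t)_{ij} = ∫_Ω f_i \overline{f_j} e^{−t g} dμ. Then each H(t) is Hermitian positive definite (so det H(t) is a positive real number), and the real-valued function t ↦ log det H(t) is convex on ℝ. -/

import Mathlib

/-!
The quadratic form of `H t` at `c` is `∫ |∑ i, conj (c i) * f i|² e^{-t g} dμ`, which is positive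
by linear independence. For convexity, restrict `μ` to a σ-finite set carrying the `f i`; then
Andréief's identity gives
`N! * det H t = ∫_{Ω^N} |det (f i (x k))|² e^{-t ∑ k, g (x k)} dμ^N`,
so `det H t` is, up to a constant, the Laplace transform of a positive measure, and the logarithm
of a Laplace transform is convex by Hölder's inequality.
-/

open MeasureTheory Matrix
open scoped ComplexConjugate ComplexOrder

section PermutationInvariance

variable {Ω ι : Type*} [MeasurableSpace Ω]

lemma coe_piCongrLeft_perm_symm (τ : Equiv.Perm ι) :
    ⇑(MeasurableEquiv.piCongrLeft (fun _ => Ω) τ.symm) = fun x : ι → Ω => x ∘ τ := by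
  ext x k
  simp [MeasurableEquiv.piCongrLeft, Equiv.piCongrLeft_apply_eq_cast]

variable [Fintype ι] (ν : Measure Ω) [SigmaFinite ν]

lemma measurePreserving_comp_perm (τ : Equiv.Perm ι) :
    MeasurePreserving (fun x : ι → Ω => x ∘ τ) (Measure.pi fun _ => ν) (Measure.pi fun _ => ν) := by
  rw [← coe_piCongrLeft_perm_symm]
  exact measurePreserving_piCongrLeft (fun _ => ν) τ.symm

lemma integral_comp_perm {E : Type*} [NormedAddCommGroup E] [NormedSpace ℝ E]
    (g : (ι → Ω) → E) (τ : Equiv.Perm ι) :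
    ∫ x, g (x ∘ τ) ∂(Measure.pi fun _ => ν) = ∫ x, g x ∂(Measure.pi fun _ => ν) := by
  have h := (measurePreserving_piCongrLeft (fun _ => ν) τ.symm).integral_comp' g
  rwa [coe_piCongrLeft_perm_symm] at h

end PermutationInvariance

section Andreief

variable {𝕜 Ω ι : Type*} [RCLike 𝕜] [Fintype ι] [DecidableEq ι]

lemma det_of_apply_mul_prod_eq_sum (φ ψ : ι → Ω → 𝕜) (x : ι → Ω) :
    det (of fun i k => φ i (x k)) * ∏ k, ψ k (x k) =
      ∑ σ : Equiv.Perm ι, (Equiv.Perm.sign σ : 𝕜) * ∏ k, φ (σ k) (x k) * ψ k (x k) := by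
  simp only [det_apply', of_apply, Finset.sum_mul, Finset.prod_mul_distrib, mul_assoc]

lemma sum_perm_det_of_apply_mul_prod (φ ψ : ι → Ω → 𝕜) (x : ι → Ω) :
    ∑ τ : Equiv.Perm ι, det (of fun i k => φ i ((x ∘ τ) k)) * ∏ k, ψ k ((x ∘ τ) k) =
      det (of fun i k => φ i (x k)) * det (of fun i k => ψ i (x k)) := by
  rw [← det_transpose (of fun i k => ψ i (x k)), det_apply' (of fun i k => ψ i (x k))ᵀ,
    Finset.mul_sum]
  refine Finset.sum_congr rfl fun τ _ => ?_
  rw [show of (fun i k => φ i ((x ∘ τ) k)) = (of fun i k => φ i (x k)).submatrix id τ from rfl,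
    det_permute']
  simp only [transpose_apply, of_apply, Function.comp_apply]
  ring

variable [MeasurableSpace Ω] (ν : Measure Ω) [SigmaFinite ν] {φ ψ : ι → Ω → 𝕜}

lemma integrable_det_of_apply_mul_prod (h : ∀ i j, Integrable (fun x => φ i x * ψ j x) ν) :
    Integrable (fun x : ι → Ω => det (of fun i k => φ i (x k)) * ∏ k, ψ k (x k))
      (Measure.pi fun _ => ν) := by
  simp_rw [det_of_apply_mul_prod_eq_sum]
  exact integrable_finsetSum _ fun σ _ =>
    (Integrable.fintype_prod (f := fun k y => φ (σ k) y * ψ k y) fun _ => h _ _).const_mul _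

lemma integral_det_of_apply_mul_prod (h : ∀ i j, Integrable (fun x => φ i x * ψ j x) ν) :
    ∫ x : ι → Ω, det (of fun i k => φ i (x k)) * ∏ k, ψ k (x k) ∂(Measure.pi fun _ => ν) =
      det (of fun i j => ∫ x, φ i x * ψ j x ∂ν) := by
  simp_rw [det_of_apply_mul_prod_eq_sum, det_apply', of_apply]
  rw [integral_finsetSum _ fun σ _ =>
    (Integrable.fintype_prod (f := fun k y => φ (σ k) y * ψ k y) fun _ => h _ _).const_mul _]
  refine Finset.sum_congr rfl fun σ _ => ?_
  rw [integral_const_mul, integral_fintype_prod_eq_prod (fun k y => φ (σ k) y * ψ k y)]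

lemma integrable_det_mul_det (h : ∀ i j, Integrable (fun x => φ i x * ψ j x) ν) :
    Integrable (fun x : ι → Ω => det (of fun i k => φ i (x k)) * det (of fun i k => ψ i (x k)))
      (Measure.pi fun _ => ν) := by
  simp_rw [← sum_perm_det_of_apply_mul_prod]
  exact integrable_finsetSum _ fun τ _ =>
    (measurePreserving_comp_perm ν τ).integrable_comp_of_integrable
      (integrable_det_of_apply_mul_prod ν h)

/-- Andréief's identity. -/
theorem natCast_factorial_mul_det_integral_mul
    (h : ∀ i j, Integrable (fun x => φ i x * ψ j x) ν) :
    ((Fintype.card ι).factorial : 𝕜) * det (of fun i j => ∫ x, φ i x * ψ j x ∂ν) =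
      ∫ x : ι → Ω, det (of fun i k => φ i (x k)) * det (of fun i k => ψ i (x k))
        ∂(Measure.pi fun _ => ν) := by
  set G := fun x : ι → Ω => det (of fun i k => φ i (x k)) * ∏ k, ψ k (x k)
  have hG : Integrable G (Measure.pi fun _ => ν) := integrable_det_of_apply_mul_prod ν h
  have hGint : ∫ x, G x ∂(Measure.pi fun _ => ν) = det (of fun i j => ∫ x, φ i x * ψ j x ∂ν) :=
    integral_det_of_apply_mul_prod ν h
  calc ((Fintype.card ι).factorial : 𝕜) * det (of fun i j => ∫ x, φ i x * ψ j x ∂ν)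
      = ∑ τ : Equiv.Perm ι, ∫ x, G (x ∘ τ) ∂(Measure.pi fun _ => ν) := by
        rw [Finset.sum_congr rfl fun τ _ => integral_comp_perm ν G τ, hGint, Finset.sum_const,
          Finset.card_univ, Fintype.card_perm, nsmul_eq_mul]
    _ = ∫ x, ∑ τ : Equiv.Perm ι, G (x ∘ τ) ∂(Measure.pi fun _ => ν) :=
        (integral_finsetSum _ fun τ _ =>
          (measurePreserving_comp_perm ν τ).integrable_comp_of_integrable hG).symm
    _ = _ := by simp only [G, sum_perm_det_of_apply_mul_prod]

end Andreief

section LogConvex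

variable {α : Type*} [MeasurableSpace α] {ν : Measure α}

theorem integral_rpow_mul_rpow_le {u v : α → ℝ} (hu : 0 ≤ᵐ[ν] u) (hv : 0 ≤ᵐ[ν] v)
    (hui : Integrable u ν) (hvi : Integrable v ν) {p q : ℝ} (hp : 0 ≤ p) (hq : 0 ≤ q)
    (hpq : p + q = 1) :
    ∫ x, u x ^ p * v x ^ q ∂ν ≤ (∫ x, u x ∂ν) ^ p * (∫ x, v x ∂ν) ^ q := by
  have hlin : ∫⁻ x, ENNReal.ofReal (u x ^ p * v x ^ q) ∂ν =
      ∫⁻ x, ENNReal.ofReal (u x) ^ p * ENNReal.ofReal (v x) ^ q ∂ν := by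
    refine lintegral_congr_ae ?_
    filter_upwards [hu, hv] with x hux hvx
    rw [ENNReal.ofReal_mul (Real.rpow_nonneg hux p), ENNReal.ofReal_rpow_of_nonneg hux hp,
      ENNReal.ofReal_rpow_of_nonneg hvx hq]
  have hholder := ENNReal.lintegral_mul_norm_pow_le hui.aemeasurable.ennreal_ofReal
    hvi.aemeasurable.ennreal_ofReal hp hq hpq
  have hfin : (∫⁻ x, ENNReal.ofReal (u x) ∂ν) ^ p * (∫⁻ x, ENNReal.ofReal (v x) ∂ν) ^ q ≠ ⊤ :=
    ENNReal.mul_ne_top (ENNReal.rpow_ne_top_of_nonneg hp hui.lintegral_lt_top.ne)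
      (ENNReal.rpow_ne_top_of_nonneg hq hvi.lintegral_lt_top.ne)
  have hm : AEStronglyMeasurable (fun x => u x ^ p * v x ^ q) ν :=
    ((hui.aemeasurable.pow_const p).mul (hvi.aemeasurable.pow_const q)).aestronglyMeasurable
  have hnn : 0 ≤ᵐ[ν] fun x => u x ^ p * v x ^ q := by
    filter_upwards [hu, hv] with x hux hvx
    exact mul_nonneg (Real.rpow_nonneg hux p) (Real.rpow_nonneg hvx q)
  rw [integral_eq_lintegral_of_nonneg_ae hnn hm, integral_eq_lintegral_of_nonneg_ae hu hui.1,
    integral_eq_lintegral_of_nonneg_ae hv hvi.1, hlin, ENNReal.toReal_rpow,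
    ENNReal.toReal_rpow, ← ENNReal.toReal_mul]
  exact ENNReal.toReal_mono hfin hholder

theorem convexOn_log_integral_mul_exp {A B : α → ℝ} (hA : 0 ≤ᵐ[ν] A)
    (hint : ∀ t, Integrable (fun x => A x * Real.exp (t * B x)) ν)
    (hpos : ∀ t, 0 < ∫ x, A x * Real.exp (t * B x) ∂ν) :
    ConvexOn ℝ Set.univ fun t => Real.log (∫ x, A x * Real.exp (t * B x) ∂ν) := by
  refine ⟨convex_univ, fun s _ u _ a b ha hb hab => ?_⟩
  have hsplit : ∀ᵐ x ∂ν, A x * Real.exp ((a • s + b • u) * B x) =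
      (A x * Real.exp (s * B x)) ^ a * (A x * Real.exp (u * B x)) ^ b := by
    filter_upwards [hA] with x hAx
    rw [Real.mul_rpow hAx (Real.exp_pos _).le, Real.mul_rpow hAx (Real.exp_pos _).le,
      mul_mul_mul_comm, ← Real.rpow_add' hAx (by rw [hab]; exact one_ne_zero), hab,
      Real.rpow_one, ← Real.exp_mul, ← Real.exp_mul, ← Real.exp_add, smul_eq_mul, smul_eq_mul]
    ring_nf
  have hholder := integral_rpow_mul_rpow_le
    (hA.mono fun x hx => mul_nonneg hx (Real.exp_pos _).le)
    (hA.mono fun x hx => mul_nonneg hx (Real.exp_pos _).le) (hint s) (hint u) ha hb hab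
  rw [← integral_congr_ae hsplit] at hholder
  calc Real.log (∫ x, A x * Real.exp ((a • s + b • u) * B x) ∂ν)
      ≤ Real.log ((∫ x, A x * Real.exp (s * B x) ∂ν) ^ a *
          (∫ x, A x * Real.exp (u * B x) ∂ν) ^ b) := Real.log_le_log (hpos _) hholder
    _ = a • Real.log (∫ x, A x * Real.exp (s * B x) ∂ν) +
          b • Real.log (∫ x, A x * Real.exp (u * B x) ∂ν) := by
        rw [Real.log_mul (Real.rpow_pos_of_pos (hpos s) a).ne'
          (Real.rpow_pos_of_pos (hpos u) b).ne', Real.log_rpow (hpos s), Real.log_rpow (hpos u),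
          smul_eq_mul, smul_eq_mul]

end LogConvex

lemma exists_sigmaFinite_restrict_forall_ae_eq_zero {Ω ι E : Type*} [MeasurableSpace Ω]
    {μ : Measure Ω} [Fintype ι] [NormedAddCommGroup E] {p : ENNReal} (hp₀ : p ≠ 0) (hp : p ≠ ⊤)
    {f : ι → Ω → E} (hf : ∀ i, MemLp (f i) p μ) :
    ∃ S, MeasurableSet S ∧ SigmaFinite (μ.restrict S) ∧ ∀ i, ∀ᵐ x ∂μ, x ∉ S → f i x = 0 := by
  obtain ⟨S, hS, hzero, hσ⟩ :=
    ((memLp_pi_iff.mpr hf).aefinStronglyMeasurable hp₀ hp).exists_set_sigmaFinite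
  refine ⟨S, hS, hσ, fun i => ?_⟩
  rw [Filter.EventuallyEq, ae_restrict_iff' hS.compl] at hzero
  exact hzero.mono fun x hx hxS => congrFun (hx hxS) i

lemma abs_exp_neg_mul_le {a M : ℝ} (ha : |a| ≤ M) (t : ℝ) :
    |Real.exp (-(t * a))| ≤ Real.exp (|t| * M) := by
  rw [abs_of_pos (Real.exp_pos _), Real.exp_le_exp]
  exact (neg_le_abs _).trans (abs_mul t a ▸ mul_le_mul_of_nonneg_left ha (abs_nonneg t))

lemma ofReal_normSq_sum_mul_mul {Ω ι : Type*} [Fintype ι] (c : ι → ℂ) (f : ι → Ω → ℂ)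
    (w : Ω → ℝ) (x : Ω) :
    ((Complex.normSq (∑ i, c i * f i x) * w x : ℝ) : ℂ) =
      ∑ i, ∑ j, c i * conj (c j) * (f i x * conj (f j x) * w x) := by
  rw [Complex.ofReal_mul, ← Complex.mul_conj, map_sum, Finset.sum_mul_sum, Finset.sum_mul]
  refine Finset.sum_congr rfl fun i _ => ?_
  rw [Finset.sum_mul]
  refine Finset.sum_congr rfl fun j _ => ?_
  rw [map_mul]
  ring

lemma det_of_apply_mul_mul_det_of_conj {Ω ι : Type*} [Fintype ι] [DecidableEq ι]
    (f : ι → Ω → ℂ) (w : Ω → ℝ) (x : ι → Ω) :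
    det (of fun i k => f i (x k) * w (x k)) * det (of fun i k => conj (f i (x k))) =
      ((Complex.normSq (det (of fun i k => f i (x k))) * ∏ k, w (x k) : ℝ) : ℂ) := by
  have hrow : det (of fun i k => f i (x k) * w (x k)) =
      (∏ k, (w (x k) : ℂ)) * det (of fun i k => f i (x k)) := by
    rw [← det_mul_row]
    simp only [of_apply, mul_comm]
  have hconj : det (of fun i k => conj (f i (x k))) = conj (det (of fun i k => f i (x k))) := by
    rw [RingHom.map_det]
    rfl
  rw [hrow, hconj, Complex.ofReal_mul, ← Complex.mul_conj, Complex.ofReal_prod]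
  ring

section WeightedGram

variable {Ω ι : Type*} [MeasurableSpace Ω]

noncomputable def weightedGram (μ : Measure Ω) (f : ι → Ω → ℂ) (w : Ω → ℝ) : Matrix ι ι ℂ :=
  of fun i j => ∫ x, f i x * conj (f j x) * w x ∂μ

variable {μ : Measure Ω} {f : ι → Ω → ℂ} {w : Ω → ℝ}

lemma integrable_mul_conj_mul_of_memLp_two {f₁ f₂ : Ω → ℂ} {C : ℝ}
    (h₁ : MemLp f₁ 2 μ) (h₂ : MemLp f₂ 2 μ) (hw : AEStronglyMeasurable w μ)
    (hC : ∀ᵐ x ∂μ, |w x| ≤ C) : Integrable (fun x => f₁ x * conj (f₂ x) * w x) μ :=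
  (h₁.integrable_mul h₂.star).mul_bdd (Complex.continuous_ofReal.comp_aestronglyMeasurable hw)
    (hC.mono fun x hx => by rwa [Complex.norm_real, Real.norm_eq_abs])

lemma weightedGram_restrict_of_ae_compl_eq_zero {S : Set Ω}
    (hS : ∀ i, ∀ᵐ x ∂μ, x ∉ S → f i x = 0) (w : Ω → ℝ) :
    weightedGram (μ.restrict S) f w = weightedGram μ f w := by
  ext i j
  exact setIntegral_eq_integral_of_ae_compl_eq_zero ((hS i).mono fun x hx hxS => by simp [hx hxS])

variable [Fintype ι]

lemma integrable_normSq_sum_mul (hint : ∀ i j, Integrable (fun x => f i x * conj (f j x) * w x) μ)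
    (c : ι → ℂ) : Integrable (fun x => Complex.normSq (∑ i, c i * f i x) * w x) μ := by
  have h : Integrable (fun x => ((Complex.normSq (∑ i, c i * f i x) * w x : ℝ) : ℂ)) μ := by
    simp_rw [ofReal_normSq_sum_mul_mul]
    exact integrable_finsetSum _ fun i _ => integrable_finsetSum _ fun j _ =>
      (hint i j).const_mul _
  simpa only [RCLike.re_to_complex, Complex.ofReal_re] using h.re

lemma star_dotProduct_weightedGram_mulVec
    (hint : ∀ i j, Integrable (fun x => f i x * conj (f j x) * w x) μ) (c : ι → ℂ) :
    star c ⬝ᵥ (weightedGram μ f w *ᵥ c) =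
      ((∫ x, Complex.normSq (∑ i, conj (c i) * f i x) * w x ∂μ : ℝ) : ℂ) := by
  rw [← integral_complex_ofReal]
  simp_rw [ofReal_normSq_sum_mul_mul, Complex.conj_conj]
  rw [integral_finsetSum _ fun i _ => integrable_finsetSum _ fun j _ => (hint i j).const_mul _]
  simp only [dotProduct, mulVec, weightedGram, of_apply, Pi.star_apply, Complex.star_def,
    Finset.mul_sum]
  refine Finset.sum_congr rfl fun i _ => ?_
  rw [integral_finsetSum _ fun j _ => (hint i j).const_mul _]
  refine Finset.sum_congr rfl fun j _ => ?_
  rw [integral_const_mul]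
  ring

theorem posDef_weightedGram (hw : ∀ᵐ x ∂μ, 0 < w x)
    (hint : ∀ i j, Integrable (fun x => f i x * conj (f j x) * w x) μ)
    (hind : ∀ c : ι → ℂ, (∀ᵐ x ∂μ, ∑ j, c j * f j x = 0) → c = 0) :
    (weightedGram μ f w).PosDef := by
  rw [posDef_iff_dotProduct_mulVec]
  refine ⟨?_, fun c hc => ?_⟩
  · ext i j
    rw [conjTranspose_apply, weightedGram, of_apply, of_apply, Complex.star_def, ← integral_conj]
    congr 1 with x
    simp only [map_mul, Complex.conj_conj, Complex.conj_ofReal]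
    ring
  rw [star_dotProduct_weightedGram_mulVec hint, Complex.zero_lt_real]
  have hnn : 0 ≤ᵐ[μ] fun x => Complex.normSq (∑ i, conj (c i) * f i x) * w x :=
    hw.mono fun x hx => mul_nonneg (Complex.normSq_nonneg _) hx.le
  refine (integral_nonneg_of_ae hnn).lt_of_ne fun h0 => hc ?_
  have hzero : ∀ᵐ x ∂μ, ∑ i, conj (c i) * f i x = 0 := by
    filter_upwards [(integral_eq_zero_iff_of_nonneg_ae hnn
      (integrable_normSq_sum_mul hint _)).mp h0.symm, hw] with x hx hwx
    simpa [hwx.ne'] using hx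
  funext i
  simpa using congrFun (hind _ hzero) i

variable [DecidableEq ι] [SigmaFinite μ]

theorem integrable_normSq_det_mul_prod
    (hint : ∀ i j, Integrable (fun x => f i x * conj (f j x) * w x) μ) :
    Integrable (fun x : ι → Ω => Complex.normSq (det (of fun i k => f i (x k))) * ∏ k, w (x k))
      (Measure.pi fun _ => μ) := by
  have h := integrable_det_mul_det (φ := fun i x => f i x * w x) (ψ := fun j x => conj (f j x)) μ
    fun i j => (hint i j).congr (ae_of_all _ fun x => by ring)
  simp_rw [det_of_apply_mul_mul_det_of_conj] at h
  simpa only [RCLike.re_to_complex, Complex.ofReal_re] using h.re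

theorem natCast_factorial_mul_det_weightedGram
    (hint : ∀ i j, Integrable (fun x => f i x * conj (f j x) * w x) μ) :
    ((Fintype.card ι).factorial : ℂ) * det (weightedGram μ f w) =
      ∫ x : ι → Ω, Complex.normSq (det (of fun i k => f i (x k))) * ∏ k, w (x k)
        ∂(Measure.pi fun _ => μ) := by
  simp_rw [weightedGram, mul_right_comm (f _ _) (conj _) _]
  rw [natCast_factorial_mul_det_integral_mul μ fun i j =>
    (hint i j).congr (ae_of_all _ fun x => by ring), ← integral_complex_ofReal]
  simp_rw [det_of_apply_mul_mul_det_of_conj]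

theorem convexOn_log_re_det_weightedGram_exp {g : Ω → ℝ}
    (hint : ∀ t i j, Integrable (fun x => f i x * conj (f j x) * Real.exp (-(t * g x))) μ)
    (hpos : ∀ t, 0 < (weightedGram μ f fun x => Real.exp (-(t * g x))).det.re) :
    ConvexOn ℝ Set.univ fun t =>
      Real.log (weightedGram μ f fun x => Real.exp (-(t * g x))).det.re := by
  have hprod : ∀ t (x : ι → Ω),
      ∏ k, Real.exp (-(t * g (x k))) = Real.exp (t * -∑ k, g (x k)) := fun t x => by
    rw [← Real.exp_sum, mul_neg, Finset.mul_sum, ← Finset.sum_neg_distrib]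
  have handreief : ∀ t, ((Fintype.card ι).factorial : ℝ) *
      (weightedGram μ f fun x => Real.exp (-(t * g x))).det.re =
      ∫ x : ι → Ω, Complex.normSq (det (of fun i k => f i (x k))) *
        Real.exp (t * -∑ k, g (x k)) ∂(Measure.pi fun _ => μ) := fun t => by
    have h := congrArg Complex.re (natCast_factorial_mul_det_weightedGram (hint t))
    rw [← Complex.ofReal_natCast, Complex.re_ofReal_mul, Complex.ofReal_re] at h
    simpa only [hprod] using h
  have hfact : (0 : ℝ) < (Fintype.card ι).factorial := mod_cast Nat.factorial_pos _
  have hconv := convexOn_log_integral_mul_exp (ae_of_all _ fun x => Complex.normSq_nonneg _)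
    (fun t => by simpa only [hprod] using integrable_normSq_det_mul_prod (hint t))
    fun t => (handreief t).symm ▸ mul_pos hfact (hpos t)
  refine (hconv.add_const (-Real.log (Fintype.card ι).factorial)).congr fun t _ => ?_
  rw [Pi.add_apply, ← handreief t, Real.log_mul hfact.ne' (hpos t).ne']
  ring

end WeightedGram

theorem stmt6_general {Ω : Type*} [MeasurableSpace Ω] (μ : Measure Ω)
    (N : ℕ) (f : Fin N → Ω → ℂ)
    (hfL2 : ∀ j, MemLp (f j) 2 μ)
    (hind : ∀ c : Fin N → ℂ, (∀ᵐ x ∂μ, (∑ j, c j * f j x) = 0) → c = 0)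
    (g : Ω → ℝ) (hgm : Measurable g) (M : ℝ) (hgb : ∀ x, |g x| ≤ M)
    (H : ℝ → Matrix (Fin N) (Fin N) ℂ)
    (hH : ∀ t i j, H t i j
        = ∫ x, f i x * conj (f j x) * (Real.exp (-(t * g x)) : ℂ) ∂μ) :
    (∀ t : ℝ, (H t).PosDef ∧ (H t).det.im = 0 ∧ 0 < (H t).det.re) ∧
    ConvexOn ℝ Set.univ (fun t => Real.log ((H t).det.re)) := by
  have hint : ∀ t i j, Integrable (fun x => f i x * conj (f j x) * Real.exp (-(t * g x))) μ :=
    fun t i j => integrable_mul_conj_mul_of_memLp_two (hfL2 i) (hfL2 j)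
      (Real.measurable_exp.comp (hgm.const_mul t).neg).aestronglyMeasurable
      (ae_of_all _ fun x => abs_exp_neg_mul_le (hgb x) t)
  have hHt : ∀ t, H t = weightedGram μ f fun x => Real.exp (-(t * g x)) := fun t => ext (hH t)
  have hPD : ∀ t, (H t).PosDef := fun t => (hHt t).symm ▸
    posDef_weightedGram (ae_of_all _ fun _ => Real.exp_pos _) (hint t) hind
  have hdet : ∀ t, (H t).det.im = 0 ∧ 0 < (H t).det.re := fun t => by
    obtain ⟨hre, him⟩ := Complex.pos_iff.mp (hPD t).det_pos
    exact ⟨him.symm, hre⟩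
  refine ⟨fun t => ⟨hPD t, hdet t⟩, ?_⟩
  obtain ⟨S, -, _, hfS⟩ :=
    exists_sigmaFinite_restrict_forall_ae_eq_zero two_ne_zero ENNReal.ofNat_ne_top hfL2
  simp_rw [hHt, ← weightedGram_restrict_of_ae_compl_eq_zero hfS] at hdet ⊢
  exact convexOn_log_re_det_weightedGram_exp (fun t i j => (hint t i j).restrict)
    fun t => (hdet t).2

/-- Convexity of `t ↦ log det H t` for the weighted Gram matrices
`H t` with entries `∫ fᵢ conj fⱼ e^{−t g} dμ`, where `f₁, …, f_N` are square-integrable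
and linearly independent in `L²(μ)` and `g` is bounded measurable; moreover each `H t`
is Hermitian positive definite with positive real determinant. -/
theorem stmt6 {Ω : Type*} [MeasurableSpace Ω] (μ : Measure Ω)
    (N : ℕ) (hN : 1 ≤ N) (f : Fin N → Ω → ℂ)
    (hfm : ∀ j, Measurable (f j)) (hfL2 : ∀ j, MemLp (f j) 2 μ)
    (hind : ∀ c : Fin N → ℂ, (∀ᵐ x ∂μ, (∑ j, c j * f j x) = 0) → c = 0)
    (g : Ω → ℝ) (hgm : Measurable g) (M : ℝ) (hgb : ∀ x, |g x| ≤ M)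
    (H : ℝ → Matrix (Fin N) (Fin N) ℂ)
    (hH : ∀ t i j, H t i j
        = ∫ x, f i x * conj (f j x) * (Real.exp (-(t * g x)) : ℂ) ∂μ) :
    (∀ t : ℝ, (H t).PosDef ∧ (H t).det.im = 0 ∧ 0 < (H t).det.re) ∧
    ConvexOn ℝ Set.univ (fun t => Real.log ((H t).det.re)) :=
  stmt6_general μ N f hfL2 hind g hgm M hgb H hH
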